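/- Let C = ⟨a, b⟩ be an HFP-code of type Q of length 4n. Then the permutation π_a associated to the generator a has order 2n. -/

import Mathlib

/-!
Since `π` is a homomorphism on `C`, `π (aᵏ) = π_aᵏ`, so `π_a²ⁿ = π_u = 1`. If `π_aʳ = 1` for
some `0 < r < 2n`, then `a²ʳ = aʳ + π_aʳ(aʳ) = aʳ + aʳ = 0` with `0 < 2r < 4n`, contradicting
that `a` has order `4n` in `(C, ·)`.
-/

/-- The action of a coordinate permutation `σ` on a binary vector:
`(permAct σ v) i = v (σ⁻¹ i)`. -/
def permAct {m : ℕ} (σ : Equiv.Perm (Fin m)) (v : Fin m → ZMod 2) : Fin m → ZMod 2 :=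
  fun i => v (σ.symm i)

/-- The propelinear operation `x · y = x + π_x(y)`. -/
def pmul {m : ℕ} (π : (Fin m → ZMod 2) → Equiv.Perm (Fin m))
    (x y : Fin m → ZMod 2) : Fin m → ZMod 2 :=
  x + permAct (π x) y

/-- Powers with respect to the propelinear operation. -/
def ppow {m : ℕ} (π : (Fin m → ZMod 2) → Equiv.Perm (Fin m))
    (g : Fin m → ZMod 2) : ℕ → Fin m → ZMod 2
  | 0 => 0
  | k + 1 => pmul π g (ppow π g k)

/-- The all-ones vector. -/
def allOnes (m : ℕ) : Fin m → ZMod 2 := fun _ => 1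

section Propelinear

variable {m : ℕ} {π : (Fin m → ZMod 2) → Equiv.Perm (Fin m)}

lemma permAct_one (v : Fin m → ZMod 2) : permAct 1 v = v := rfl

lemma permAct_mul (σ τ : Equiv.Perm (Fin m)) (v : Fin m → ZMod 2) :
    permAct (σ * τ) v = permAct σ (permAct τ v) := rfl

lemma permAct_add (σ : Equiv.Perm (Fin m)) (v w : Fin m → ZMod 2) :
    permAct σ (v + w) = permAct σ v + permAct σ w := rfl

lemma pmul_zero_left (hπ0 : π 0 = 1) (y : Fin m → ZMod 2) : pmul π 0 y = y := by
  rw [pmul, hπ0, permAct_one, zero_add]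

lemma pmul_assoc {x y : Fin m → ZMod 2} (h : π (pmul π x y) = π x * π y)
    (z : Fin m → ZMod 2) : pmul π (pmul π x y) z = pmul π x (pmul π y z) := by
  simp only [pmul] at h ⊢
  rw [h, permAct_mul, permAct_add, add_assoc]

lemma ppow_mem {C : Finset (Fin m → ZMod 2)} (h0 : 0 ∈ C)
    (hclosed : ∀ x ∈ C, ∀ y ∈ C, pmul π x y ∈ C) {a : Fin m → ZMod 2} (ha : a ∈ C) (k : ℕ) :
    ppow π a k ∈ C := by
  induction k with
  | zero => exact h0
  | succ k ih => exact hclosed a ha _ ih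

variable {a : Fin m → ZMod 2}

lemma map_ppow (hπ0 : π 0 = 1)
    (hmul : ∀ k, π (pmul π a (ppow π a k)) = π a * π (ppow π a k)) (k : ℕ) :
    π (ppow π a k) = π a ^ k := by
  induction k with
  | zero => exact hπ0
  | succ k ih => rw [ppow, hmul, ih, pow_succ']

lemma ppow_add_eq_pmul (hπ0 : π 0 = 1)
    (hmul : ∀ k, π (pmul π a (ppow π a k)) = π a * π (ppow π a k)) (k l : ℕ) :
    ppow π a (k + l) = pmul π (ppow π a k) (ppow π a l) := by
  induction k with
  | zero => rw [zero_add, ppow, pmul_zero_left hπ0]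
  | succ k ih => rw [Nat.succ_add, ppow, ih, ← pmul_assoc (hmul k), ppow]

lemma ppow_add_of_pow_eq_one (hπ0 : π 0 = 1)
    (hmul : ∀ k, π (pmul π a (ppow π a k)) = π a * π (ppow π a k))
    {k : ℕ} (hk : π a ^ k = 1) (l : ℕ) :
    ppow π a (k + l) = ppow π a k + ppow π a l := by
  rw [ppow_add_eq_pmul hπ0 hmul, pmul, map_ppow hπ0 hmul, hk, permAct_one]

lemma ppow_two_mul_eq_zero_of_pow_eq_one (hπ0 : π 0 = 1)
    (hmul : ∀ k, π (pmul π a (ppow π a k)) = π a * π (ppow π a k))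
    {k : ℕ} (hk : π a ^ k = 1) : ppow π a (2 * k) = 0 := by
  rw [two_mul, ppow_add_of_pow_eq_one hπ0 hmul hk]
  exact ZModModule.add_self _

end Propelinear

theorem stmt_16_general (n : ℕ) (hn : 0 < n) (C : Finset (Fin (4*n) → ZMod 2))
    (π : (Fin (4*n) → ZMod 2) → Equiv.Perm (Fin (4*n)))
    (h0 : (0 : Fin (4*n) → ZMod 2) ∈ C)
    (hclosed : ∀ x ∈ C, ∀ y ∈ C, pmul π x y ∈ C)
    (hhom : ∀ x ∈ C, ∀ y ∈ C, π (pmul π x y) = π x * π y)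
    (hπ0 : π 0 = 1) (hπu : π (allOnes (4*n)) = 1)
    (a : Fin (4*n) → ZMod 2) (ha : a ∈ C)
    (haord : ∀ m : ℕ, 0 < m → m < 4*n → ppow π a m ≠ 0)
    (ha2n : ppow π a (2*n) = allOnes (4*n))
    : orderOf (π a) = 2*n := by
  have hmul : ∀ k, π (pmul π a (ppow π a k)) = π a * π (ppow π a k) :=
    fun k => hhom a ha _ (ppow_mem h0 hclosed ha k)
  rw [orderOf_eq_iff (by omega)]
  refine ⟨by rw [← map_ppow hπ0 hmul, ha2n, hπu], fun r hr hr0 hr1 => ?_⟩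
  exact haord (2 * r) (by omega) (by omega) (ppow_two_mul_eq_zero_of_pow_eq_one hπ0 hmul hr1)

/-- Let `C = ⟨a, b⟩` be an HFP-code of type Q of length `4n`
(the group `(C, ·)` is dicyclic: `a⁴ⁿ = 0`, `a²ⁿ = b² = u`, `b⁻¹ a b = a⁻¹`).
Then the permutation `π_a` associated to the generator `a` has order `2n`. -/
theorem stmt_16 (n : ℕ) (hn : 0 < n) (C : Finset (Fin (4*n) → ZMod 2))
    (π : (Fin (4*n) → ZMod 2) → Equiv.Perm (Fin (4*n)))
    (h0 : (0 : Fin (4*n) → ZMod 2) ∈ C) (hu : allOnes (4*n) ∈ C)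
    (hcard : C.card = 8*n)
    (hclosed : ∀ x ∈ C, ∀ y ∈ C, pmul π x y ∈ C)
    (hhom : ∀ x ∈ C, ∀ y ∈ C, π (pmul π x y) = π x * π y)
    (hπ0 : π 0 = 1) (hπu : π (allOnes (4*n)) = 1)
    (hfree : ∀ x ∈ C, x ≠ 0 → x ≠ allOnes (4*n) → ∀ i, π x i ≠ i)
    (hdist : ∀ x ∈ C, ∀ y ∈ C, x ≠ y → x ≠ y + allOnes (4*n) → hammingDist x y = 2*n)
    (a b : Fin (4*n) → ZMod 2) (ha : a ∈ C) (hb : b ∈ C)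
    (haord : ∀ m : ℕ, 0 < m → m < 4*n → ppow π a m ≠ 0)
    (ha4n : ppow π a (4*n) = 0)
    (ha2n : ppow π a (2*n) = allOnes (4*n))
    (hb2 : pmul π b b = allOnes (4*n))
    (hrel : pmul π a b = pmul π b (ppow π a (4*n - 1)))
    (hgen : ∀ x ∈ C, ∃ i j : ℕ, x = pmul π (ppow π a i) (ppow π b j))
    : orderOf (π a) = 2*n :=
  stmt_16_general n hn C π h0 hclosed hhom hπ0 hπu a ha haord ha2n
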